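/- Let r be a positive integer and 0 < δ < 1/(100r). Let X₀,…,X_r be an SoS-augmented δ-weak martingale sequence of random variables with values in [0,1] such that X₀ = 1/2 almost surely and X_r ∈ {0,1} almost surely. Then P[ ∃ i ∈ {1,…,r} with |X_i − X_{i−1}| ≥ 1/(4√r) ] ≥ 1/20. -/

import Mathlib

open MeasureTheory ENNReal

/-!
Stop `X` at the first time `τ` at which its sum of squared increments `Q` reaches `1/16`. For the
stopped process `M` and `T = Q_{· ∧ τ}`, the discrete Itô formula for `x ↦ x (1 - x)` reads
`M_r (1 - M_r) + T_r = 1/4 + ∑_{j<r} g_j (X_{j+1} - X_j)` with `g_j = 1_{Q_j < 1/16} (1 - 2 X_j)`,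
a function of `(X_j, Q_j)` bounded by `1`. The SoS-augmented weak martingale property thus bounds the
expectation of the right-hand side below by `1/4 - rδ`. Pathwise, if `Q_r < 1/16` then
`M_r = X_r ∈ {0, 1}` and the left-hand side is `Q_r < 1/16`; otherwise it is at most
`1/4 + 1/16 + 1`, as `T` overshoots `1/16` by at most one squared increment. Hence
`P[Q_r ≥ 1/16] ≥ 4/5 (3/16 - rδ) > 1/20`, and `Q_r ≥ 1/16` forces an increment of size `1/(4√r)`.
-/

noncomputable def quadVar {Ω : Type*} (X : ℕ → Ω → ℝ) (k : ℕ) (ω : Ω) : ℝ :=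
  ∑ j ∈ Finset.Icc 1 k, (X j ω - X (j - 1) ω) ^ 2

noncomputable def stopOnReach {Ω : Type*} (Q : ℕ → Ω → ℝ) (a : ℝ) (Y : ℕ → Ω → ℝ) :
    ℕ → Ω → ℝ
  | 0, ω => Y 0 ω
  | k + 1, ω => if Q k ω < a then Y (k + 1) ω else stopOnReach Q a Y k ω

noncomputable def lyapunovWeight {Ω : Type*} (a : ℝ) (X : ℕ → Ω → ℝ) (j : ℕ) (ω : Ω) : ℝ :=
  if quadVar X j ω < a then 1 - 2 * X j ω else 0

section Pathwise

variable {Ω : Type*} {X Y Q : ℕ → Ω → ℝ} {a : ℝ} {ω : Ω}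

@[simp]
lemma quadVar_zero : quadVar X 0 ω = 0 := by simp [quadVar]

lemma quadVar_succ (k : ℕ) :
    quadVar X (k + 1) ω = quadVar X k ω + (X (k + 1) ω - X k ω) ^ 2 := by
  rw [quadVar, Finset.sum_Icc_succ_top (by omega), Nat.add_sub_cancel, quadVar]

lemma monotone_quadVar : Monotone fun k => quadVar X k ω :=
  monotone_nat_of_le_succ fun k => by
    rw [quadVar_succ]
    exact le_add_of_nonneg_right (sq_nonneg _)

lemma stopOnReach_eq_of_lt (hQ : Monotone fun k => Q k ω) {k : ℕ} (h : Q k ω < a) :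
    stopOnReach Q a Y k ω = Y k ω := by
  cases k with
  | zero => rfl
  | succ k => exact if_pos ((hQ k.le_succ).trans_lt h)

lemma stopOnReach_quadVar_le {c : ℝ} (hac : 0 ≤ a + c) {k : ℕ}
    (hX : ∀ j < k, (X (j + 1) ω - X j ω) ^ 2 ≤ c) :
    stopOnReach (quadVar X) a (quadVar X) k ω ≤ a + c := by
  induction k with
  | zero => simpa [stopOnReach] using hac
  | succ k ih =>
    simp only [stopOnReach]
    split_ifs with h
    · rw [quadVar_succ]
      linarith [hX k k.lt_succ_self]
    · exact ih fun j hj => hX j (hj.trans k.lt_succ_self)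

lemma stopOnReach_lyapunov_eq (k : ℕ) :
    stopOnReach (quadVar X) a X k ω * (1 - stopOnReach (quadVar X) a X k ω) +
        stopOnReach (quadVar X) a (quadVar X) k ω =
      X 0 ω * (1 - X 0 ω) +
        ∑ j ∈ Finset.range k, lyapunovWeight a X j ω * (X (j + 1) ω - X j ω) := by
  induction k with
  | zero => simp [stopOnReach]
  | succ k ih =>
    rw [Finset.sum_range_succ, ← add_assoc, ← ih]
    simp only [stopOnReach, lyapunovWeight]
    split_ifs with h
    · rw [stopOnReach_eq_of_lt monotone_quadVar h, stopOnReach_eq_of_lt monotone_quadVar h,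
        quadVar_succ]
      ring
    · ring

lemma lyapunov_le_add_indicator {r : ℕ} (ha : 0 ≤ a)
    (hX : ∀ i ≤ r, X i ω ∈ Set.Icc (0 : ℝ) 1) (hend : X r ω = 0 ∨ X r ω = 1) :
    X 0 ω * (1 - X 0 ω) + ∑ j ∈ Finset.range r, lyapunovWeight a X j ω * (X (j + 1) ω - X j ω) ≤
      a + {ω | a ≤ quadVar X r ω}.indicator (fun _ => 5 / 4) ω := by
  rw [← stopOnReach_lyapunov_eq]
  by_cases hA : a ≤ quadVar X r ω
  · have hT : stopOnReach (quadVar X) a (quadVar X) r ω ≤ a + 1 :=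
      stopOnReach_quadVar_le (by linarith) fun j hj => by
        obtain ⟨h₀, h₁⟩ := hX j hj.le
        obtain ⟨h₀', h₁'⟩ := hX (j + 1) hj
        nlinarith
    rw [Set.indicator_of_mem (show ω ∈ {ω | a ≤ quadVar X r ω} from hA)]
    nlinarith [sq_nonneg (stopOnReach (quadVar X) a X r ω - 1 / 2)]
  · rw [not_le] at hA
    rw [Set.indicator_of_notMem (show ω ∉ {ω | a ≤ quadVar X r ω} from not_le.2 hA),
      stopOnReach_eq_of_lt monotone_quadVar hA, stopOnReach_eq_of_lt monotone_quadVar hA]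
    rcases hend with h | h <;> rw [h] <;> linarith

lemma exists_le_abs_sub_of_mul_sq_le {r : ℕ} (hr : 0 < r) {b : ℝ}
    (h : r * b ^ 2 ≤ quadVar X r ω) : ∃ i, 1 ≤ i ∧ i ≤ r ∧ b ≤ |X i ω - X (i - 1) ω| := by
  by_contra! hlt
  have hsq : ∀ i ∈ Finset.Icc 1 r, (X i ω - X (i - 1) ω) ^ 2 < b ^ 2 := fun i hi => by
    obtain ⟨h₁, h₂⟩ := Finset.mem_Icc.1 hi
    exact sq_lt_sq' (by linarith [neg_abs_le (X i ω - X (i - 1) ω), hlt i h₁ h₂])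
      ((le_abs_self _).trans_lt (hlt i h₁ h₂))
  have := Finset.sum_lt_sum_of_nonempty ⟨1, Finset.mem_Icc.2 ⟨le_rfl, hr⟩⟩ hsq
  simp only [Finset.sum_const, Nat.card_Icc, Nat.add_sub_cancel, nsmul_eq_mul] at this
  exact (this.trans_le h).false

lemma norm_lyapunovWeight_le {j : ℕ} (h : X j ω ∈ Set.Icc (0 : ℝ) 1) :
    ‖lyapunovWeight a X j ω‖ ≤ 1 := by
  obtain ⟨h₀, h₁⟩ := h
  rw [lyapunovWeight, Real.norm_eq_abs]
  split_ifs <;> rw [abs_le] <;> constructor <;> linarith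

end Pathwise

noncomputable abbrev sosAlgebra {Ω : Type*} (X : ℕ → Ω → ℝ) (j : ℕ) : MeasurableSpace Ω :=
  MeasurableSpace.comap (fun ω => (X j ω, quadVar X j ω)) inferInstance

def IsSosWeakMartingale {Ω : Type*} [MeasurableSpace Ω] (μ : Measure Ω) (X : ℕ → Ω → ℝ) (r : ℕ)
    (δ : ℝ) : Prop :=
  ∀ j < r, ∀ᵐ ω ∂μ, |μ[X (j + 1)|sosAlgebra X j] ω - X j ω| ≤ δ

section Measurability

variable {Ω : Type*} [MeasurableSpace Ω] {X : ℕ → Ω → ℝ}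

lemma measurable_quadVar (hX : ∀ i, Measurable (X i)) (k : ℕ) : Measurable (quadVar X k) :=
  Finset.measurable_sum _ fun j _ => ((hX j).sub (hX (j - 1))).pow_const 2

lemma sosAlgebra_le (hX : ∀ i, Measurable (X i)) (j : ℕ) : sosAlgebra X j ≤ ‹MeasurableSpace Ω› :=
  ((hX j).prodMk (measurable_quadVar hX j)).comap_le

end Measurability

lemma stronglyMeasurable_lyapunovWeight {Ω : Type*} (X : ℕ → Ω → ℝ) (a : ℝ) (j : ℕ) :
    StronglyMeasurable[sosAlgebra X j] (lyapunovWeight a X j) :=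
  ((Measurable.ite (measurableSet_lt measurable_snd measurable_const)
    (measurable_const.sub (measurable_const.mul measurable_fst)) measurable_const).comp
    (comap_measurable _)).stronglyMeasurable

section WeakMartingaleTransform

variable {Ω : Type*} {m m₀ : MeasurableSpace Ω} {μ : Measure Ω}

lemma abs_integral_mul_sub_le_of_abs_condExp_sub_le [IsProbabilityMeasure μ] (hm : m ≤ m₀)
    {g Y Z : Ω → ℝ} {C δ : ℝ} (hg : StronglyMeasurable[m] g) (hgC : ∀ᵐ ω ∂μ, ‖g ω‖ ≤ C)
    (hY : Integrable Y μ) (hZ : Integrable Z μ) (hYZ : ∀ᵐ ω ∂μ, |μ[Y|m] ω - Z ω| ≤ δ) :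
    |∫ ω, g ω * (Y ω - Z ω) ∂μ| ≤ C * δ := by
  have hg₀ : AEStronglyMeasurable g μ := (hg.mono hm).aestronglyMeasurable
  have hgY : ∫ ω, g ω * Y ω ∂μ = ∫ ω, g ω * μ[Y|m] ω ∂μ :=
    calc ∫ ω, g ω * Y ω ∂μ = ∫ ω, μ[g * Y|m] ω ∂μ := (integral_condExp hm).symm
      _ = ∫ ω, g ω * μ[Y|m] ω ∂μ :=
        integral_congr_ae (condExp_stronglyMeasurable_mul_of_bound hm hg hY C hgC)
  have hbound : ∀ᵐ ω ∂μ, ‖g ω * (μ[Y|m] ω - Z ω)‖ ≤ C * δ := by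
    filter_upwards [hgC, hYZ] with ω h₁ h₂
    rw [norm_mul, Real.norm_eq_abs]
    exact mul_le_mul h₁ h₂ (abs_nonneg _) ((norm_nonneg _).trans h₁)
  simp only [mul_sub]
  rw [integral_sub (hY.bdd_mul hg₀ hgC) (hZ.bdd_mul hg₀ hgC), hgY,
    ← integral_sub (integrable_condExp.bdd_mul hg₀ hgC) (hZ.bdd_mul hg₀ hgC)]
  simpa [mul_sub] using norm_integral_le_of_norm_le_const hbound

variable {r : ℕ} {g X : ℕ → Ω → ℝ} {C : ℝ}

lemma integrable_mul_sub_of_mem_range (hg : ∀ j < r, AEStronglyMeasurable (g j) μ)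
    (hgC : ∀ j < r, ∀ᵐ ω ∂μ, ‖g j ω‖ ≤ C) (hX : ∀ j ≤ r, Integrable (X j) μ) :
    ∀ j ∈ Finset.range r, Integrable (fun ω => g j ω * (X (j + 1) ω - X j ω)) μ := fun j hj => by
  rw [Finset.mem_range] at hj
  exact ((hX _ hj).sub (hX _ hj.le)).bdd_mul (hg j hj) (hgC j hj)

lemma abs_integral_sum_mul_sub_le [IsProbabilityMeasure μ] {𝓕 : ℕ → MeasurableSpace Ω}
    (h𝓕 : ∀ j < r, 𝓕 j ≤ m₀) {δ : ℝ} (hg : ∀ j < r, StronglyMeasurable[𝓕 j] (g j))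
    (hgC : ∀ j < r, ∀ᵐ ω ∂μ, ‖g j ω‖ ≤ C) (hX : ∀ j ≤ r, Integrable (X j) μ)
    (hXδ : ∀ j < r, ∀ᵐ ω ∂μ, |μ[X (j + 1)|𝓕 j] ω - X j ω| ≤ δ) :
    |∫ ω, ∑ j ∈ Finset.range r, g j ω * (X (j + 1) ω - X j ω) ∂μ| ≤ r * (C * δ) := by
  rw [integral_finsetSum _ (integrable_mul_sub_of_mem_range
    (fun j hj => ((hg j hj).mono (h𝓕 j hj)).aestronglyMeasurable) hgC hX)]
  calc _ ≤ ∑ j ∈ Finset.range r, |∫ ω, g j ω * (X (j + 1) ω - X j ω) ∂μ| :=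
        Finset.abs_sum_le_sum_abs _ _
    _ ≤ ∑ _j ∈ Finset.range r, C * δ := Finset.sum_le_sum fun j hj => by
        rw [Finset.mem_range] at hj
        exact abs_integral_mul_sub_le_of_abs_condExp_sub_le (h𝓕 j hj) (hg j hj) (hgC j hj)
          (hX _ hj) (hX _ hj.le) (hXδ j hj)
    _ = r * (C * δ) := by simp

end WeakMartingaleTransform

lemma IsSosWeakMartingale.le_measureReal_setOf_le_quadVar {Ω : Type*} [MeasurableSpace Ω]
    {μ : Measure Ω} [IsProbabilityMeasure μ] {X : ℕ → Ω → ℝ} {r : ℕ} {δ : ℝ}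
    (hmart : IsSosWeakMartingale μ X r δ) (hXmeas : ∀ i, Measurable (X i))
    (hrange : ∀ i ≤ r, ∀ᵐ ω ∂μ, X i ω ∈ Set.Icc (0 : ℝ) 1) {x₀ : ℝ}
    (hstart : ∀ᵐ ω ∂μ, X 0 ω = x₀) (hend : ∀ᵐ ω ∂μ, X r ω = 0 ∨ X r ω = 1) {a : ℝ} (ha : 0 ≤ a) :
    x₀ * (1 - x₀) - a - r * δ ≤ 5 / 4 * μ.real {ω | a ≤ quadVar X r ω} := by
  set A := {ω | a ≤ quadVar X r ω}
  set S : Ω → ℝ := fun ω => ∑ j ∈ Finset.range r, lyapunovWeight a X j ω * (X (j + 1) ω - X j ω)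
  have hA : MeasurableSet A := measurableSet_le measurable_const (measurable_quadVar hXmeas r)
  have hXint : ∀ i ≤ r, Integrable (X i) μ := fun i hi =>
    (integrable_const (1 : ℝ)).mono' (hXmeas i).aestronglyMeasurable <| by
      filter_upwards [hrange i hi] with ω ⟨h₀, h₁⟩
      rwa [Real.norm_eq_abs, abs_of_nonneg h₀]
  have hgC : ∀ j < r, ∀ᵐ ω ∂μ, ‖lyapunovWeight a X j ω‖ ≤ 1 := fun j hj =>
    (hrange j hj.le).mono fun _ => norm_lyapunovWeight_le
  have hS : Integrable S μ := integrable_finsetSum _ <| integrable_mul_sub_of_mem_range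
    (fun j _ => ((stronglyMeasurable_lyapunovWeight X a j).mono
      (sosAlgebra_le hXmeas j)).aestronglyMeasurable) hgC hXint
  have hlower : |∫ ω, S ω ∂μ| ≤ r * (1 * δ) := abs_integral_sum_mul_sub_le
    (fun j _ => sosAlgebra_le hXmeas j) (fun j _ => stronglyMeasurable_lyapunovWeight X a j)
    hgC hXint hmart
  have hpath : ∀ᵐ ω ∂μ, x₀ * (1 - x₀) + S ω ≤ a + A.indicator (fun _ => 5 / 4) ω := by
    filter_upwards [hstart, hend, (Set.finite_Iic r).eventually_all.2 hrange] with ω h₀ hr hX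
    rw [← h₀]
    exact lyapunov_le_add_indicator ha hX hr
  have hupper : ∫ ω, (x₀ * (1 - x₀) + S ω) ∂μ ≤ ∫ ω, (a + A.indicator (fun _ => 5 / 4) ω) ∂μ :=
    integral_mono_ae ((integrable_const _).add hS)
      ((integrable_const _).add ((integrable_const _).indicator hA)) hpath
  rw [integral_add (integrable_const _) hS, integral_add (integrable_const _)
    ((integrable_const _).indicator hA), integral_indicator_const _ hA] at hupper
  simp only [integral_const, smul_eq_mul, probReal_univ, one_mul] at hupper
  linarith [(abs_le.1 hlower).1]

theorem sos_augmented_weak_martingale_gap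
    {Ω : Type*} [MeasurableSpace Ω] (μ : Measure Ω) [IsProbabilityMeasure μ]
    (r : ℕ) (hr : 0 < r) (δ : ℝ) (hδ : δ < 1 / (100 * r))
    (X : ℕ → Ω → ℝ) (hXmeas : ∀ i, Measurable (X i))
    (hrange : ∀ i ≤ r, ∀ᵐ ω ∂μ, X i ω ∈ Set.Icc (0 : ℝ) 1)
    (hstart : ∀ᵐ ω ∂μ, X 0 ω = 1 / 2)
    (hend : ∀ᵐ ω ∂μ, X r ω = 0 ∨ X r ω = 1)
    (hmart : ∀ i, 1 ≤ i → i ≤ r → ∀ᵐ ω ∂μ,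
      |(μ[X i | MeasurableSpace.comap
          (fun ω => (X (i - 1) ω,
            ∑ j ∈ Finset.Icc 1 (i - 1), (X j ω - X (j - 1) ω) ^ 2))
          inferInstance]) ω - X (i - 1) ω| ≤ δ) :
    (1 / 20 : ℝ≥0∞) ≤
      μ {ω | ∃ i, 1 ≤ i ∧ i ≤ r ∧
        1 / (4 * Real.sqrt r) ≤ |X i ω - X (i - 1) ω|} := by
  have hsos : IsSosWeakMartingale μ X r δ := fun j hj => by
    have := hmart (j + 1) (by omega) hj
    simp only [Nat.add_sub_cancel] at this
    exact this
  have hgap := hsos.le_measureReal_setOf_le_quadVar hXmeas hrange hstart hend (a := 1 / 16) (by norm_num)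
  have hrδ : r * δ < 1 / 100 := by
    rw [lt_div_iff₀ (by positivity)] at hδ
    linarith
  have hprob : 1 / 20 ≤ μ.real {ω | 1 / 16 ≤ quadVar X r ω} := by linarith
  have hsub : {ω | 1 / 16 ≤ quadVar X r ω} ⊆
      {ω | ∃ i, 1 ≤ i ∧ i ≤ r ∧ 1 / (4 * Real.sqrt r) ≤ |X i ω - X (i - 1) ω|} := by
    have hb : (r : ℝ) * (1 / (4 * Real.sqrt r)) ^ 2 = 1 / 16 := by
      rw [div_pow, mul_pow, Real.sq_sqrt (Nat.cast_nonneg r)]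
      field_simp
      norm_num
    exact fun ω hω => exists_le_abs_sub_of_mul_sq_le hr (hb ▸ hω)
  calc (1 / 20 : ℝ≥0∞) = ENNReal.ofReal (1 / 20) := by
        rw [ENNReal.ofReal_div_of_pos (by norm_num)]
        norm_num
    _ ≤ μ {ω | 1 / 16 ≤ quadVar X r ω} := ENNReal.ofReal_le_of_le_toReal hprob
    _ ≤ _ := measure_mono hsub
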